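/- arXiv:2106.03486 — 2 statements merged into one kernel-verified Lean document; each statement's English description precedes it below -/
import Mathlib

section
/- Let V ⊂ H be a continuously embedded pair of Hilbert spaces with compact embedding, and A : V × V → ℂ a continuous sesquilinear form satisfying the Gårding inequality Re A(u,u) ≥ γ‖u‖²_V - γ'‖u‖²_H with γ > 0. If the only solution u ∈ V of A(u,v) = 0 for all v ∈ V is u = 0, then for every continuous linear functional F on V there exists a unique u ∈ V with A(u,v) = F(v) for all v ∈ V. -/
/-!
Riesz representation turns `A` into an operator `T` with `⟪T u, v⟫ = A u v`. Gårding's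
inequality says that `T + γ' J*J` is coercive, where `J` is the embedding, so by Lax–Milgram it is
invertible; `J*J` is compact because `J` is. Hence `T` is an invertible operator minus a compact
one, and by the Fredholm alternative such an operator is invertible as soon as it is injective,
which is the uniqueness hypothesis.
-/

open scoped InnerProductSpace

namespace IsCompactOperator

variable {𝕜 X : Type*} [NontriviallyNormedField 𝕜] [NormedAddCommGroup X] [NormedSpace 𝕜 X]
  [CompleteSpace X]

theorem isUnit_sub_of_injective {S K : X →L[𝕜] X} (hS : IsUnit S) (hK : IsCompactOperator K)
    (hinj : Function.Injective (S - K)) : IsUnit (S - K) := by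
  obtain ⟨S, rfl⟩ := hS
  set C : X →L[𝕜] X := ↑S⁻¹ * K
  have hfactor : ↑S - K = ↑S * (1 - C) := by simp [C, mul_sub, ← mul_assoc]
  have hC : IsCompactOperator C := hK.clm_comp _
  have hnot : ¬ Module.End.HasEigenvalue (C : Module.End 𝕜 X) 1 := by
    intro hev
    obtain ⟨x, hx⟩ := hev.exists_hasEigenvector
    have hCx : C x = x := by simpa using hx.apply_eq_smul
    exact hx.2 (hinj (by simp [hfactor, hCx]))
  have hres := (hC.hasEigenvalue_or_mem_resolventSet one_ne_zero).resolve_left hnot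
  rw [hfactor]
  exact S.isUnit.mul (by simpa [spectrum.mem_resolventSet_iff] using hres)

end IsCompactOperator

namespace ContinuousLinearMap

variable {𝕜 E : Type*} [RCLike 𝕜] [NormedAddCommGroup E] [InnerProductSpace 𝕜 E] [CompleteSpace E]

theorem isUnit_of_coercive_add_compact {T K : E →L[𝕜] E} (hK : IsCompactOperator K) {γ : ℝ}
    (hγ : 0 < γ) (hcoer : ∀ u, γ * ‖u‖ ^ 2 ≤ RCLike.re ⟪(T + K) u, u⟫_𝕜)
    (hinj : Function.Injective T) : IsUnit T := by
  have hS : IsUnit (T + K) :=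
    isUnit_of_forall_le_norm_inner_map _ (c := ⟨γ, hγ.le⟩) hγ fun u => by
      change ‖u‖ ^ 2 * γ ≤ _
      rw [mul_comm]
      exact (hcoer u).trans (RCLike.re_le_norm _)
  simpa using hK.isUnit_sub_of_injective hS (by simpa using hinj)

end ContinuousLinearMap

theorem stmt_7_general {V H : Type*}
    [NormedAddCommGroup V] [InnerProductSpace ℂ V] [CompleteSpace V]
    [NormedAddCommGroup H] [InnerProductSpace ℂ H] [CompleteSpace H]
    (emb : V →L[ℂ] H)
    (hcomp : IsCompactOperator (⇑emb))
    (A : V → V → ℂ) (M : ℝ)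
    (hbound : ∀ u v : V, ‖A u v‖ ≤ M * ‖u‖ * ‖v‖)
    (hadd1 : ∀ u u' v : V, A (u + u') v = A u v + A u' v)
    (hsmul1 : ∀ (c : ℂ) (u v : V), A (c • u) v = (starRingEnd ℂ) c * A u v)
    (hadd2 : ∀ u v v' : V, A u (v + v') = A u v + A u v')
    (hsmul2 : ∀ (c : ℂ) (u v : V), A u (c • v) = c * A u v)
    (γ γ' : ℝ) (hγ : 0 < γ)
    (hgarding : ∀ u : V, (A u u).re ≥ γ * ‖u‖ ^ 2 - γ' * ‖emb u‖ ^ 2)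
    (huniq : ∀ u : V, (∀ v : V, A u v = 0) → u = 0) :
    ∀ F : V →L[ℂ] ℂ, ∃! u : V, ∀ v : V, A u v = F v := by
  let B : V →L⋆[ℂ] V →L[ℂ] ℂ :=
    (LinearMap.mk₂'ₛₗ (starRingEnd ℂ) (RingHom.id ℂ) A hadd1 hsmul1 hadd2 hsmul2).mkContinuous₂
      M hbound
  set T := InnerProductSpace.continuousLinearMapOfBilin B
  have hT (u v : V) : ⟪T u, v⟫_ℂ = A u v := InnerProductSpace.continuousLinearMapOfBilin_apply B u v
  set K : V →L[ℂ] V := (γ' : ℂ) • (ContinuousLinearMap.adjoint emb ∘L emb)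
  have hK (u v : V) : ⟪K u, v⟫_ℂ = γ' * ⟪emb u, emb v⟫_ℂ := by
    simp [K, ContinuousLinearMap.adjoint_inner_left]
  have hKc : IsCompactOperator K := (hcomp.clm_comp (ContinuousLinearMap.adjoint emb)).smul (γ' : ℂ)
  have hcoer (u : V) : γ * ‖u‖ ^ 2 ≤ RCLike.re ⟪(T + K) u, u⟫_ℂ := by
    have hre : RCLike.re ((γ' : ℂ) * ⟪emb u, emb u⟫_ℂ) = γ' * ‖emb u‖ ^ 2 := by
      rw [RCLike.re_to_complex, Complex.re_ofReal_mul, ← RCLike.re_to_complex, inner_self_eq_norm_sq]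
    rw [add_apply, inner_add_left, hT, hK, map_add, hre, RCLike.re_to_complex]
    linarith [hgarding u]
  have hTinj : Function.Injective T := by
    refine (injective_iff_map_eq_zero T).2 fun u hu => huniq u fun v => ?_
    rw [← hT, hu, inner_zero_left]
  have hbij := ContinuousLinearMap.isUnit_iff_bijective.1
    (ContinuousLinearMap.isUnit_of_coercive_add_compact hKc hγ hcoer hTinj)
  intro F
  refine (existsUnique_congr fun u => ?_).2
    (hbij.existsUnique ((InnerProductSpace.toDual ℂ V).symm F))
  simp only [← hT, ← InnerProductSpace.toDual_symm_apply]
  exact ⟨ext_inner_right ℂ, fun h v => h ▸ rfl⟩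

/-- Fredholm-alternative existence theorem: if `V` is compactly embedded in
`H`, `A` is a bounded sesquilinear form on `V` satisfying a Gårding
inequality, and the homogeneous problem has only the trivial solution, then
for every continuous linear functional `F` the variational problem
`A(u,v) = F(v)` for all `v` has a unique solution. -/
theorem stmt_7 {V H : Type*}
    [NormedAddCommGroup V] [InnerProductSpace ℂ V] [CompleteSpace V]
    [NormedAddCommGroup H] [InnerProductSpace ℂ H] [CompleteSpace H]
    (emb : V →L[ℂ] H) (hinj : Function.Injective emb)
    (hcomp : IsCompactOperator (⇑emb))
    (A : V → V → ℂ) (M : ℝ)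
    (hbound : ∀ u v : V, ‖A u v‖ ≤ M * ‖u‖ * ‖v‖)
    (hadd1 : ∀ u u' v : V, A (u + u') v = A u v + A u' v)
    (hsmul1 : ∀ (c : ℂ) (u v : V), A (c • u) v = (starRingEnd ℂ) c * A u v)
    (hadd2 : ∀ u v v' : V, A u (v + v') = A u v + A u v')
    (hsmul2 : ∀ (c : ℂ) (u v : V), A u (c • v) = c * A u v)
    (γ γ' : ℝ) (hγ : 0 < γ)
    (hgarding : ∀ u : V, (A u u).re ≥ γ * ‖u‖ ^ 2 - γ' * ‖emb u‖ ^ 2)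
    (huniq : ∀ u : V, (∀ v : V, A u v = 0) → u = 0) :
    ∀ F : V →L[ℂ] ℂ, ∃! u : V, ∀ v : V, A u v = F v :=
  stmt_7_general emb hcomp A M hbound hadd1 hsmul1 hadd2 hsmul2 γ γ' hγ hgarding huniq
end

section
/- Let V and W be Hilbert spaces, A : V × V → ℂ a bounded coercive sesquilinear form (Re A(u,u) ≥ α‖u‖²_V with α > 0) and B : V × W → ℂ a bounded bilinear form satisfying the inf-sup condition sup_{‖u‖_V=1}|B(u,λ)| ≥ β‖λ‖_W for all λ ∈ W with β > 0. Then for every F ∈ V' the saddle-point problem A(u,v) + B(v,λ) = F(v) for all v ∈ V, B(u,μ) = 0 for all μ ∈ W, has a unique solution (u,λ) ∈ V × W. -/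
/-!
Via the Riesz representation, `A u v = ⟪T u, v⟫` and `B v μ = ⟪R μ, v⟫` for a coercive operator
`T` and a conjugate-linear `R`, which the inf-sup condition makes bounded below; hence `R` is
injective with closed range `K`, and the problem reads `T u + R λ = f`, `u ∈ Kᗮ`.
On the Hilbert space `Kᗮ` the compression of `T` is still coercive, hence surjective
(Lax–Milgram), giving `u ∈ Kᗮ` with `f - T u ∈ Kᗮᗮ = K`, i.e. `f - T u = R λ`.
For uniqueness, a solution of the homogeneous problem has `⟪T u, u⟫ = -⟪R λ, u⟫ = 0`, so `u = 0`
by coercivity and then `λ = 0` by injectivity of `R`.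
-/

open RCLike InnerProductSpace

section BoundedBelow

variable {𝕜 𝕜₂ : Type*} [NormedField 𝕜] [NormedField 𝕜₂] {σ : 𝕜 →+* 𝕜₂}
  {E F : Type*} [SeminormedAddCommGroup E] [NormedSpace 𝕜 E]
  [NormedAddCommGroup F] [NormedSpace 𝕜₂ F] {f : E →SL[σ] F} {β : ℝ}

theorem ContinuousLinearMap.antilipschitz_of_mul_norm_le (hβ : 0 < β)
    (hf : ∀ x, β * ‖x‖ ≤ ‖f x‖) : AntilipschitzWith ⟨β⁻¹, (inv_pos.2 hβ).le⟩ f :=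
  f.antilipschitz_of_bound fun x => (le_inv_mul_iff₀ hβ).2 (hf x)

theorem ContinuousLinearMap.isClosed_range_of_mul_norm_le [CompleteSpace E] (hβ : 0 < β)
    (hf : ∀ x, β * ‖x‖ ≤ ‖f x‖) : IsClosed (Set.range f) :=
  (f.antilipschitz_of_mul_norm_le hβ hf).isClosed_range f.uniformContinuous

end BoundedBelow

section Coercive

variable {𝕜 : Type*} [RCLike 𝕜] {H : Type*} [NormedAddCommGroup H] [InnerProductSpace 𝕜 H]
  {T : H →L[𝕜] H} {α : ℝ}

theorem mul_norm_le_norm_of_coercive (hT : ∀ u, α * ‖u‖ ^ 2 ≤ re ⟪T u, u⟫_𝕜) (u : H) :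
    α * ‖u‖ ≤ ‖T u‖ := by
  rcases (norm_nonneg u).eq_or_lt with hu | hu
  · simp [← hu]
  refine le_of_mul_le_mul_right ?_ hu
  calc α * ‖u‖ * ‖u‖ = α * ‖u‖ ^ 2 := by ring
    _ ≤ re ⟪T u, u⟫_𝕜 := hT u
    _ ≤ ‖⟪T u, u⟫_𝕜‖ := re_le_norm _
    _ ≤ ‖T u‖ * ‖u‖ := norm_inner_le_norm _ _

theorem eq_zero_of_coercive_of_inner_self_eq_zero (hα : 0 < α)
    (hT : ∀ u, α * ‖u‖ ^ 2 ≤ re ⟪T u, u⟫_𝕜) {u : H} (hu : ⟪T u, u⟫_𝕜 = 0) : u = 0 := by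
  have h : α * ‖u‖ ^ 2 ≤ 0 := by simpa only [hu, map_zero] using hT u
  simpa [hα.ne'] using le_antisymm h (by positivity)

theorem surjective_of_coercive [CompleteSpace H] (hα : 0 < α)
    (hT : ∀ u, α * ‖u‖ ^ 2 ≤ re ⟪T u, u⟫_𝕜) : Function.Surjective T := by
  set K := LinearMap.range (T : H →ₗ[𝕜] H)
  have hK : IsClosed (K : Set H) := by
    simpa only [K, LinearMap.coe_range, ContinuousLinearMap.coe_coe] using
      T.isClosed_range_of_mul_norm_le hα (mul_norm_le_norm_of_coercive hT)
  have : CompleteSpace K := hK.completeSpace_coe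
  suffices K = ⊤ from LinearMap.range_eq_top.1 this
  rw [← Submodule.orthogonal_eq_bot_iff, Submodule.eq_bot_iff]
  exact fun w hw => eq_zero_of_coercive_of_inner_self_eq_zero hα hT
    ((Submodule.mem_orthogonal K w).1 hw (T w) (LinearMap.mem_range_self _ w))

end Coercive

section SaddlePoint

variable {𝕜 : Type*} [RCLike 𝕜] {σ : 𝕜 →+* 𝕜}
  {V W : Type*} [NormedAddCommGroup V] [InnerProductSpace 𝕜 V]
  [NormedAddCommGroup W] [NormedSpace 𝕜 W] {T : V →L[𝕜] V} {R : W →SL[σ] V} {α β : ℝ}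

theorem saddle_point_eq_zero (hα : 0 < α) (hT : ∀ u, α * ‖u‖ ^ 2 ≤ re ⟪T u, u⟫_𝕜)
    (hR : Function.Injective R) {u : V} {l : W} (hu : ∀ μ, ⟪R μ, u⟫_𝕜 = 0)
    (h : T u + R l = 0) : u = 0 ∧ l = 0 := by
  have hRl : R l = -T u := eq_neg_of_add_eq_zero_right h
  have hu0 : u = 0 := by
    refine eq_zero_of_coercive_of_inner_self_eq_zero hα hT ?_
    simpa only [hRl, inner_neg_left, neg_eq_zero] using hu l
  refine ⟨hu0, hR ?_⟩
  rw [hRl, hu0, map_zero, neg_zero, map_zero]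

variable [RingHomSurjective σ]

theorem exists_saddle_point [CompleteSpace V] [CompleteSpace W] (hα : 0 < α)
    (hT : ∀ u, α * ‖u‖ ^ 2 ≤ re ⟪T u, u⟫_𝕜) (hβ : 0 < β) (hR : ∀ l, β * ‖l‖ ≤ ‖R l‖) (f : V) :
    ∃ u, (∀ μ, ⟪R μ, u⟫_𝕜 = 0) ∧ ∃ l, T u + R l = f := by
  set K := LinearMap.range (R : W →ₛₗ[σ] V)
  have hK : IsClosed (K : Set V) := by
    simpa only [K, LinearMap.coe_range, ContinuousLinearMap.coe_coe] using
      R.isClosed_range_of_mul_norm_le hβ hR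
  have : CompleteSpace K := hK.completeSpace_coe
  set P := Kᗮ.orthogonalProjectionOnto
  obtain ⟨w, hw⟩ := surjective_of_coercive (T := P ∘L T ∘L Kᗮ.subtypeL) hα
    (fun w => by simpa [P] using hT w) (P f)
  have hfw : f - T w ∈ Kᗮᗮ := by
    rw [← Submodule.orthogonalProjectionOnto_eq_zero_iff, map_sub, ← hw]
    exact sub_self _
  rw [K.orthogonal_orthogonal] at hfw
  obtain ⟨l, hl⟩ := hfw
  refine ⟨w, fun μ => w.2 (R μ) (LinearMap.mem_range_self _ μ), l, ?_⟩
  rw [ContinuousLinearMap.coe_coe] at hl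
  rw [hl, add_sub_cancel]

theorem existsUnique_saddle_point [CompleteSpace V] [CompleteSpace W] (hα : 0 < α)
    (hT : ∀ u, α * ‖u‖ ^ 2 ≤ re ⟪T u, u⟫_𝕜) (hβ : 0 < β) (hR : ∀ l, β * ‖l‖ ≤ ‖R l‖) (f : V) :
    ∃! p : V × W, T p.1 + R p.2 = f ∧ ∀ μ, ⟪R μ, p.1⟫_𝕜 = 0 := by
  obtain ⟨u, hu, l, hul⟩ := exists_saddle_point hα hT hβ hR f
  refine ⟨(u, l), ⟨hul, hu⟩, ?_⟩
  rintro ⟨u', l'⟩ ⟨hul' : T u' + R l' = f, hu' : ∀ μ, ⟪R μ, u'⟫_𝕜 = 0⟩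
  obtain ⟨hu0, hl0⟩ := saddle_point_eq_zero (u := u' - u) (l := l' - l) hα hT
    (R.antilipschitz_of_mul_norm_le hβ hR).injective
    (fun μ => by rw [inner_sub_right, hu, hu', sub_zero])
    (by rw [map_sub, map_sub, ← add_sub_add_comm, hul, hul', sub_self])
  exact Prod.ext (sub_eq_zero.1 hu0) (sub_eq_zero.1 hl0)

end SaddlePoint

section Representation

variable {𝕜 : Type*} [RCLike 𝕜] {V W : Type*} [NormedAddCommGroup V] [InnerProductSpace 𝕜 V]
  [CompleteSpace V] [NormedAddCommGroup W] [NormedSpace 𝕜 W]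

theorem exists_inner_left_eq_of_sesquilinear (A : V → V → 𝕜) (M : ℝ)
    (hbound : ∀ u v, ‖A u v‖ ≤ M * ‖u‖ * ‖v‖)
    (hadd₁ : ∀ u u' v, A (u + u') v = A u v + A u' v)
    (hsmul₁ : ∀ (c : 𝕜) u v, A (c • u) v = starRingEnd 𝕜 c * A u v)
    (hadd₂ : ∀ u v v', A u (v + v') = A u v + A u v')
    (hsmul₂ : ∀ (c : 𝕜) u v, A u (c • v) = c * A u v) :
    ∃ T : V →L[𝕜] V, ∀ u v, ⟪T u, v⟫_𝕜 = A u v :=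
  let a : V →L⋆[𝕜] V →L[𝕜] 𝕜 := (LinearMap.mk₂'ₛₗ (starRingEnd 𝕜) (RingHom.id 𝕜) A
    hadd₁ hsmul₁ hadd₂ hsmul₂).mkContinuous₂ M hbound
  ⟨continuousLinearMapOfBilin a, continuousLinearMapOfBilin_apply a⟩

theorem exists_inner_left_eq_of_bilinear (B : V → W → 𝕜) (M : ℝ)
    (hbound : ∀ v l, ‖B v l‖ ≤ M * ‖v‖ * ‖l‖)
    (hadd₁ : ∀ v v' l, B (v + v') l = B v l + B v' l)
    (hsmul₁ : ∀ (c : 𝕜) v l, B (c • v) l = c * B v l)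
    (hadd₂ : ∀ v l l', B v (l + l') = B v l + B v l')
    (hsmul₂ : ∀ (c : 𝕜) v l, B v (c • l) = c * B v l) :
    ∃ R : W →L⋆[𝕜] V, ∀ l v, ⟪R l, v⟫_𝕜 = B v l :=
  let b : W →L[𝕜] StrongDual 𝕜 V := (LinearMap.mk₂' 𝕜 𝕜 (fun l v => B v l)
    (fun l l' v => hadd₂ v l l') (fun c l v => hsmul₂ c v l) (fun l v v' => hadd₁ v v' l)
    (fun c l v => hsmul₁ c v l)).mkContinuous₂ M fun l v => (hbound v l).trans_eq (by ring)
  ⟨(toDual 𝕜 V).symm.toContinuousLinearEquiv.toContinuousLinearMap ∘SL b,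
    fun _ _ => toDual_symm_apply⟩

end Representation

theorem le_norm_of_le_iSup_norm_inner {𝕜 E : Type*} [RCLike 𝕜] [NormedAddCommGroup E]
    [InnerProductSpace 𝕜 E] {x : E} {c : ℝ}
    (h : c ≤ ⨆ u : {u : E // ‖u‖ = 1}, ‖⟪x, u.1⟫_𝕜‖) : c ≤ ‖x‖ :=
  h.trans <| Real.iSup_le (fun u => (norm_inner_le_norm x u.1).trans_eq (by rw [u.2, mul_one]))
    (norm_nonneg x)

/-- Babuška–Brezzi theorem: if `A` is a bounded coercive sesquilinear form on
`V` and `B` is a bounded bilinear form on `V × W` satisfying the inf-sup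
condition, then for every continuous linear functional `F` on `V` the
saddle-point problem has a unique solution `(u, λ)`. -/
theorem stmt_11 {V W : Type*}
    [NormedAddCommGroup V] [InnerProductSpace ℂ V] [CompleteSpace V]
    [NormedAddCommGroup W] [InnerProductSpace ℂ W] [CompleteSpace W]
    (A : V → V → ℂ) (B : V → W → ℂ) (MA MB α β : ℝ) (hα : 0 < α) (hβ : 0 < β)
    (hAbound : ∀ u v : V, ‖A u v‖ ≤ MA * ‖u‖ * ‖v‖)
    (hAadd1 : ∀ u u' v : V, A (u + u') v = A u v + A u' v)
    (hAsmul1 : ∀ (c : ℂ) (u v : V), A (c • u) v = (starRingEnd ℂ) c * A u v)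
    (hAadd2 : ∀ u v v' : V, A u (v + v') = A u v + A u v')
    (hAsmul2 : ∀ (c : ℂ) (u v : V), A u (c • v) = c * A u v)
    (hAcoer : ∀ u : V, (A u u).re ≥ α * ‖u‖ ^ 2)
    (hBbound : ∀ (u : V) (l : W), ‖B u l‖ ≤ MB * ‖u‖ * ‖l‖)
    (hBadd1 : ∀ (u u' : V) (l : W), B (u + u') l = B u l + B u' l)
    (hBsmul1 : ∀ (c : ℂ) (u : V) (l : W), B (c • u) l = c * B u l)
    (hBadd2 : ∀ (u : V) (l l' : W), B u (l + l') = B u l + B u l')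
    (hBsmul2 : ∀ (c : ℂ) (u : V) (l : W), B u (c • l) = c * B u l)
    (hinfsup : ∀ l : W, β * ‖l‖ ≤ ⨆ u : {u : V // ‖u‖ = 1}, ‖B u.1 l‖) :
    ∀ F : V →L[ℂ] ℂ, ∃! p : V × W,
      (∀ v : V, A p.1 v + B v p.2 = F v) ∧ (∀ μ : W, B p.1 μ = 0) := by
  intro F
  obtain ⟨T, hT⟩ :=
    exists_inner_left_eq_of_sesquilinear A MA hAbound hAadd1 hAsmul1 hAadd2 hAsmul2
  obtain ⟨R, hR⟩ :=
    exists_inner_left_eq_of_bilinear B MB hBbound hBadd1 hBsmul1 hBadd2 hBsmul2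
  have hsystem (u : V) (l : W) :
      T u + R l = (toDual ℂ V).symm F ↔ ∀ v, A u v + B v l = F v :=
    ⟨fun h v => by rw [← hT, ← hR, ← inner_add_left, h, toDual_symm_apply],
      fun h => ext_inner_right ℂ fun v => by rw [inner_add_left, hT, hR, h, toDual_symm_apply]⟩
  have hTcoer (u : V) : α * ‖u‖ ^ 2 ≤ re ⟪T u, u⟫_ℂ := by rw [hT]; exact hAcoer u
  have hRbelow (l : W) : β * ‖l‖ ≤ ‖R l‖ :=
    le_norm_of_le_iSup_norm_inner (𝕜 := ℂ) (by simpa only [hR] using hinfsup l)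
  refine (existsUnique_congr fun p => ?_).1
    (existsUnique_saddle_point hα hTcoer hβ hRbelow ((toDual ℂ V).symm F))
  simp only [hsystem, hR]
end
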